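/- Fix real 0 < q < 1 and write q^z := exp(z·log q). Define Γ_q(z) := exp((1-z)·Log(1-q²)) · ∏_{n=0}^∞ (1 - q^{2(n+1)})/(1 - q^{2(n+z)}) whenever all factors 1 - q^{2(n+z)} are nonzero, and Γ̃_q(z) := q^{-z(z-1)}·Γ_q(z). Define the Jackson integral ∫₀^1 h(t) d_q t := (1-q²)·∑_{n=0}^∞ h(q^{2n})·q^{2n}. Let α, μ ∈ ℂ with Re μ < 0, and assume 1 - q^{2(n+α+1)} ≠ 0, 1 - q^{2(n+α+1-μ)} ≠ 0 and 1 - q^{2(n-μ)} ≠ 0 for all n ≥ 0. Then q^{-2μα} · Γ̃_q(-μ)^{-1} · ∫₀^1 t^{-μ-1} · ∏_{j=0}^∞ (1 - q^{2+2j}·t)/(1 - q^{2α+2+2j}·t) d_q t = q^{μ(μ - 2α + 1)} · Γ_q(α+1)/Γ_q(α+1-μ), where t^{-μ-1} at t = q^{2n} means q^{2n(-μ-1)}; in particular the Jackson integral converges absolutely. -/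

import Mathlib

/-- `q^z := exp(z log q)` for a real base `q` and complex exponent `z`. -/
noncomputable def qpow (q : ℝ) (z : ℂ) : ℂ := Complex.exp (z * (Real.log q : ℂ))

/-- The Jackson q-Gamma function (base `q²`)
`Γ_q(z) = (1-q²)^{1-z} ∏_{n≥0} (1 - q^{2(n+1)})/(1 - q^{2(n+z)})`,
with `(1-q²)^{1-z} = exp((1-z) Log(1-q²))`. -/
noncomputable def qGamma (q : ℝ) (z : ℂ) : ℂ :=
  Complex.exp ((1 - z) * Complex.log (1 - (q : ℂ) ^ 2)) *
    ∏' n : ℕ, (1 - qpow q (2 * ((n : ℂ) + 1))) / (1 - qpow q (2 * ((n : ℂ) + z)))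

/-- The twisted q-Gamma function `Γ̃_q(z) = q^{-z(z-1)} Γ_q(z)`. -/
noncomputable def qGammaTilde (q : ℝ) (z : ℂ) : ℂ :=
  qpow q (-(z * (z - 1))) * qGamma q z

/-- The `n`-th term of the Jackson integral
`∫₀^1 t^{-μ-1} ∏_{j≥0} (1 - q^{2+2j}t)/(1 - q^{2α+2+2j}t) d_q t`,
evaluated at `t = q^{2n}`, where `t^{-μ-1}` at `t = q^{2n}` means
`q^{2n(-μ-1)}`. -/
noncomputable def jacksonTerm (q : ℝ) (α μ : ℂ) (n : ℕ) : ℂ :=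
  qpow q (2 * (n : ℂ) * (-μ - 1)) *
    (∏' j : ℕ, (1 - qpow q (2 + 2 * (j : ℂ)) * (q : ℂ) ^ (2 * n)) /
      (1 - qpow q (2 * α + 2 + 2 * (j : ℂ)) * (q : ℂ) ^ (2 * n))) *
    (q : ℂ) ^ (2 * n)

set_option maxHeartbeats 1000000

open Complex Filter Finset Topology
namespace Stmt18



lemma summable_log {r : ℂ} (hr : ‖r‖ < 1) (c : ℂ) :
    Summable fun n : ℕ => Complex.log (1 - c * r ^ n) := by
  obtain ⟨N, hN⟩ : ∃ N : ℕ, ‖c‖ * ‖r‖ ^ N ≤ 1 / 2 := by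
    have h := tendsto_pow_atTop_nhds_zero_of_lt_one (norm_nonneg r) hr
    have h2 := h.const_mul ‖c‖
    rw [mul_zero] at h2
    have := (h2.eventually_le_const (by norm_num : (0:ℝ) < 1/2)).exists
    simpa using this
  rw [← summable_nat_add_iff N]
  apply Summable.of_norm_bounded
    (g := fun n : ℕ => 3 / 2 * (‖c‖ * ‖r‖ ^ N) * ‖r‖ ^ n)
    (((summable_geometric_of_lt_one (norm_nonneg r) hr)).mul_left _)
  intro n
  have hz : ‖-(c * r ^ (n + N))‖ ≤ 1 / 2 := by
    rw [norm_neg, norm_mul, norm_pow, pow_add]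
    calc ‖c‖ * (‖r‖ ^ n * ‖r‖ ^ N) ≤ ‖c‖ * (1 * ‖r‖ ^ N) := by
          gcongr
          exact pow_le_one₀ (norm_nonneg r) hr.le
      _ = ‖c‖ * ‖r‖ ^ N := by ring
      _ ≤ 1 / 2 := hN
  have := Complex.norm_log_one_add_half_le_self hz
  rw [← sub_eq_add_neg] at this
  refine this.trans ?_
  rw [norm_neg, norm_mul, norm_pow, pow_add]
  ring_nf
  nlinarith [norm_nonneg c, pow_nonneg (norm_nonneg r) n, pow_nonneg (norm_nonneg r) N]

lemma hasProd_E {r : ℂ} (hr : ‖r‖ < 1) {c : ℂ} (hc : ∀ n : ℕ, 1 - c * r ^ n ≠ 0) :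
    HasProd (fun n : ℕ => 1 - c * r ^ n)
      (Complex.exp (∑' n : ℕ, Complex.log (1 - c * r ^ n))) := by
  have h : (fun n : ℕ => 1 - c * r ^ n)
      = fun n => Complex.exp (Complex.log (1 - c * r ^ n)) :=
    funext fun n => (Complex.exp_log (hc n)).symm
  rw [h]
  exact (summable_log hr c).hasSum.cexp

lemma multipliable_E {r : ℂ} (hr : ‖r‖ < 1) {c : ℂ} (hc : ∀ n : ℕ, 1 - c * r ^ n ≠ 0) :
    Multipliable fun n : ℕ => 1 - c * r ^ n :=
  ⟨_, hasProd_E hr hc⟩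

lemma E_ne_zero {r : ℂ} (hr : ‖r‖ < 1) {c : ℂ} (hc : ∀ n : ℕ, 1 - c * r ^ n ≠ 0) :
    (∏' n : ℕ, (1 - c * r ^ n)) ≠ 0 := by
  rw [(hasProd_E hr hc).tprod_eq]
  exact Complex.exp_ne_zero _

lemma E_shift {r : ℂ} (hr : ‖r‖ < 1) {c : ℂ} (hc : ∀ n : ℕ, 1 - c * r ^ n ≠ 0) (k : ℕ) :
    (∏' n : ℕ, (1 - c * r ^ n))
      = (∏ j ∈ Finset.range k, (1 - c * r ^ j)) * ∏' n : ℕ, (1 - c * r ^ k * r ^ n) := by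
  have hm : Multipliable fun n : ℕ => 1 - c * r ^ (n + k) := by
    have := multipliable_E hr (c := c * r ^ k)
      (fun n => by rw [mul_assoc, ← pow_add, add_comm k n]; exact hc (n + k))
    refine this.congr fun n => ?_
    rw [mul_assoc, ← pow_add, add_comm k n]
  rw [(Multipliable.prod_mul_tprod_nat_mul' (f := fun n => 1 - c * r ^ n) (k := k) hm).symm]
  congr 1
  exact tprod_congr fun n => by rw [mul_assoc, ← pow_add, add_comm k n]

lemma hasProd_div {f g : ℕ → ℂ} {P R : ℂ} (hf : HasProd f P) (hg : HasProd g R)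
    (hR : R ≠ 0) : HasProd (fun n => f n / g n) (P / R) := by
  have hf' : Tendsto (fun s : Finset ℕ => ∏ i ∈ s, f i) atTop (𝓝 P) := hf
  have hg' : Tendsto (fun s : Finset ℕ => ∏ i ∈ s, g i) atTop (𝓝 R) := hg
  have h := hf'.div hg' hR
  have : HasProd (fun n => f n / g n) (P / R) :=
    h.congr fun s => (Finset.prod_div_distrib _ _).symm
  exact this




/-- coefficients of the q-binomial series -/
noncomputable def qcoef (Q : ℝ) (a : ℂ) (n : ℕ) : ℂ :=
  ∏ j ∈ Finset.range n, (1 - a * (Q : ℂ) ^ j) / (1 - (Q : ℂ) ^ (j + 1))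

variable {Q : ℝ} {a : ℂ}

lemma one_sub_Qpow_pos (hQ0 : 0 < Q) (hQ1 : Q < 1) (n : ℕ) : 0 < 1 - Q ^ (n + 1) := by
  have : Q ^ (n + 1) < 1 := pow_lt_one₀ hQ0.le hQ1 (Nat.succ_ne_zero n)
  linarith

lemma one_sub_cQpow_ne (hQ0 : 0 < Q) (hQ1 : Q < 1) (n : ℕ) :
    (1 : ℂ) - (Q : ℂ) ^ (n + 1) ≠ 0 := by
  have h := one_sub_Qpow_pos hQ0 hQ1 n
  intro hc
  rw [sub_eq_zero] at hc
  have : (Q : ℂ) ^ (n + 1) = ((Q ^ (n + 1) : ℝ) : ℂ) := by push_cast; ring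
  rw [this] at hc
  have := Complex.ofReal_eq_one.mp hc.symm
  linarith

lemma qcoef_zero : qcoef Q a 0 = 1 := by simp [qcoef]

lemma qcoef_rec (hQ0 : 0 < Q) (hQ1 : Q < 1) (n : ℕ) :
    qcoef Q a (n + 1) * (1 - (Q : ℂ) ^ (n + 1)) = qcoef Q a n * (1 - a * (Q : ℂ) ^ n) := by
  have h := one_sub_cQpow_ne hQ0 hQ1 n
  rw [qcoef, Finset.prod_range_succ, ← qcoef]
  field_simp

lemma qcoef_bound (hQ0 : 0 < Q) (hQ1 : Q < 1) (a : ℂ) :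
    ∃ K : ℝ, 0 < K ∧ ∀ n, ‖qcoef Q a n‖ ≤ K := by
  have hr : ‖(Q : ℂ)‖ < 1 := by
    rw [Complex.norm_real, Real.norm_eq_abs, abs_of_pos hQ0]; exact hQ1
  have hfac : ∀ n : ℕ, (1 : ℂ) - (Q : ℂ) * (Q : ℂ) ^ n ≠ 0 := by
    intro n
    have := one_sub_cQpow_ne hQ0 hQ1 n
    rwa [pow_succ, mul_comm ((Q:ℂ)^n)] at this
  -- the denominator product and its positivity
  set D : ℝ := ‖∏' n : ℕ, ((1 : ℂ) - (Q : ℂ) * (Q : ℂ) ^ n)‖ with hD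
  have hDpos : 0 < D := by
    rw [hD, norm_pos_iff]
    exact E_ne_zero hr hfac
  -- partial denominators are ≥ D
  have hPn : ∀ n : ℕ, D ≤ ∏ j ∈ Finset.range n, (1 - Q ^ (j + 1)) := by
    intro n
    have htend := (multipliable_E hr hfac).hasProd.tendsto_prod_nat
    have htendn : Tendsto (fun m => ‖∏ i ∈ Finset.range m, ((1:ℂ) - (Q:ℂ) * (Q:ℂ) ^ i)‖)
        atTop (𝓝 D) := by
      rw [hD]
      exact htend.norm
    have hnorm : ∀ m : ℕ, ‖∏ i ∈ Finset.range m, ((1:ℂ) - (Q:ℂ) * (Q:ℂ) ^ i)‖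
        = ∏ j ∈ Finset.range m, (1 - Q ^ (j + 1)) := by
      intro m
      rw [show (∏ i ∈ Finset.range m, ((1:ℂ) - (Q:ℂ) * (Q:ℂ) ^ i))
            = ((∏ j ∈ Finset.range m, (1 - Q ^ (j + 1)) : ℝ) : ℂ) by
          push_cast; exact Finset.prod_congr rfl fun j _ => by ring,
        Complex.norm_real, Real.norm_eq_abs,
        abs_of_pos (Finset.prod_pos fun j _ => one_sub_Qpow_pos hQ0 hQ1 j)]
    -- the real partial products are antitone
    have hanti : ∀ m k : ℕ, m ≤ k →
        (∏ j ∈ Finset.range k, (1 - Q ^ (j + 1))) ≤ ∏ j ∈ Finset.range m, (1 - Q ^ (j + 1)) := by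
      intro m k hmk
      have hfull : ∀ l : ℕ, 0 ≤ ∏ j ∈ Finset.range l, (1 - Q ^ (j + 1)) := by
        intro l
        exact Finset.prod_nonneg fun j _ => (one_sub_Qpow_pos hQ0 hQ1 j).le
      rw [← Finset.prod_range_mul_prod_Ico _ hmk]
      have h1 : ∏ j ∈ Finset.Ico m k, (1 - Q ^ (j + 1)) ≤ 1 := by
        apply Finset.prod_le_one
        · intro j _; exact (one_sub_Qpow_pos hQ0 hQ1 j).le
        · intro j _; nlinarith [pow_pos hQ0 (j + 1)]
      nlinarith [hfull m, h1, Finset.prod_nonneg (fun j (_ : j ∈ Finset.Ico m k) =>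
        (one_sub_Qpow_pos hQ0 hQ1 j).le)]
    apply le_of_tendsto htendn
    filter_upwards [eventually_ge_atTop n] with m hm
    rw [hnorm m]
    exact hanti n m hm
  -- numerator bound
  have hNum : ∀ n : ℕ, ∏ j ∈ Finset.range n, ‖(1 : ℂ) - a * (Q : ℂ) ^ j‖
      ≤ Real.exp (‖a‖ * (1 - Q)⁻¹) := by
    intro n
    calc ∏ j ∈ Finset.range n, ‖(1 : ℂ) - a * (Q : ℂ) ^ j‖
        ≤ ∏ j ∈ Finset.range n, Real.exp (‖a‖ * Q ^ j) := by
          apply Finset.prod_le_prod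
          · intro j _; exact norm_nonneg _
          · intro j _
            have h1 : ‖(1 : ℂ) - a * (Q : ℂ) ^ j‖ ≤ 1 + ‖a‖ * Q ^ j := by
              refine (norm_sub_le _ _).trans ?_
              simp only [norm_one, norm_mul, norm_pow, Complex.norm_real,
                Real.norm_eq_abs, abs_of_pos hQ0, le_refl]
            refine h1.trans ?_
            have := Real.add_one_le_exp (‖a‖ * Q ^ j)
            linarith
      _ = Real.exp (∑ j ∈ Finset.range n, ‖a‖ * Q ^ j) := by
          rw [Real.exp_sum]
      _ ≤ Real.exp (‖a‖ * (1 - Q)⁻¹) := by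
          apply Real.exp_le_exp.mpr
          rw [← Finset.mul_sum]
          apply mul_le_mul_of_nonneg_left _ (norm_nonneg a)
          rw [← tsum_geometric_of_lt_one hQ0.le hQ1]
          exact Summable.sum_le_tsum _ (fun j _ => (pow_pos hQ0 j).le)
            (summable_geometric_of_lt_one hQ0.le hQ1)
  refine ⟨Real.exp (‖a‖ * (1 - Q)⁻¹) / D, by positivity, fun n => ?_⟩
  rw [qcoef, norm_prod]
  have hstep : ∀ j ∈ Finset.range n,
      ‖(1 - a * (Q : ℂ) ^ j) / (1 - (Q : ℂ) ^ (j + 1))‖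
        = ‖1 - a * (Q : ℂ) ^ j‖ / (1 - Q ^ (j + 1)) := by
    intro j _
    rw [norm_div]
    congr 1
    have : (1 : ℂ) - (Q : ℂ) ^ (j + 1) = ((1 - Q ^ (j + 1) : ℝ) : ℂ) := by push_cast; ring
    rw [this, Complex.norm_real, Real.norm_eq_abs, abs_of_pos (one_sub_Qpow_pos hQ0 hQ1 j)]
  rw [Finset.prod_congr rfl hstep, Finset.prod_div_distrib]
  rw [div_le_div_iff₀ (by
    exact Finset.prod_pos fun j _ => one_sub_Qpow_pos hQ0 hQ1 j) hDpos]
  calc (∏ j ∈ Finset.range n, ‖1 - a * (Q:ℂ) ^ j‖) * D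
      ≤ Real.exp (‖a‖ * (1 - Q)⁻¹) * D := by
        apply mul_le_mul_of_nonneg_right (hNum n) hDpos.le
    _ ≤ Real.exp (‖a‖ * (1 - Q)⁻¹) * ∏ j ∈ Finset.range n, (1 - Q ^ (j + 1)) := by
        apply mul_le_mul_of_nonneg_left (hPn n) (Real.exp_pos _).le




noncomputable def qS (Q : ℝ) (a : ℂ) (y : ℂ) : ℂ := ∑' n : ℕ, qcoef Q a n * y ^ n

variable {Q : ℝ} {a : ℂ}

lemma summable_qS_norm (hQ0 : 0 < Q) (hQ1 : Q < 1) (a : ℂ) {y : ℂ} (hy : ‖y‖ < 1) :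
    Summable fun n : ℕ => ‖qcoef Q a n * y ^ n‖ := by
  obtain ⟨K, hK0, hK⟩ := qcoef_bound hQ0 hQ1 a
  apply Summable.of_nonneg_of_le (fun n => norm_nonneg _)
    (f := fun n => K * ‖y‖ ^ n)
  · intro n
    rw [norm_mul, norm_pow]
    exact mul_le_mul_of_nonneg_right (hK n) (pow_nonneg (norm_nonneg _) n)
  · exact (summable_geometric_of_lt_one (norm_nonneg y) hy).mul_left K

lemma summable_qS (hQ0 : 0 < Q) (hQ1 : Q < 1) (a : ℂ) {y : ℂ} (hy : ‖y‖ < 1) :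
    Summable fun n : ℕ => qcoef Q a n * y ^ n :=
  (summable_qS_norm hQ0 hQ1 a hy).of_norm

lemma qS_split (hQ0 : 0 < Q) (hQ1 : Q < 1) (a : ℂ) {y : ℂ} (hy : ‖y‖ < 1) :
    qS Q a y = 1 + ∑' n : ℕ, qcoef Q a (n + 1) * y ^ (n + 1) := by
  rw [qS, Summable.tsum_eq_zero_add (summable_qS hQ0 hQ1 a hy), qcoef_zero]
  simp

lemma qS_funeq (hQ0 : 0 < Q) (hQ1 : Q < 1) (a : ℂ) {y : ℂ} (hy : ‖y‖ < 1) :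
    (1 - y) * qS Q a y = (1 - a * y) * qS Q a ((Q : ℂ) * y) := by
  have hQc : ‖(Q : ℂ)‖ < 1 := by
    rw [Complex.norm_real, Real.norm_eq_abs, abs_of_pos hQ0]; exact hQ1
  have hQy : ‖(Q : ℂ) * y‖ < 1 := by
    rw [norm_mul]
    calc ‖(Q:ℂ)‖ * ‖y‖ ≤ 1 * ‖y‖ := by
          exact mul_le_mul_of_nonneg_right hQc.le (norm_nonneg y)
      _ = ‖y‖ := one_mul _
      _ < 1 := hy
  have h0 := summable_qS hQ0 hQ1 a hy
  have h0' := summable_qS hQ0 hQ1 a hQy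
  have h1 : Summable fun n : ℕ => qcoef Q a (n + 1) * y ^ (n + 1) :=
    (summable_nat_add_iff 1).2 h0
  have h1' : Summable fun n : ℕ => qcoef Q a (n + 1) * ((Q:ℂ) * y) ^ (n + 1) :=
    (summable_nat_add_iff 1).2 h0'
  have h2 : Summable fun n : ℕ => qcoef Q a n * y ^ (n + 1) :=
    (h0.mul_right y).congr fun n => by ring
  have h2' : Summable fun n : ℕ => a * (qcoef Q a n * ((Q:ℂ) * y) ^ n) * y :=
    ((h0'.mul_left a).mul_right y).congr fun n => by ring
  have ymul : y * qS Q a y = ∑' n : ℕ, qcoef Q a n * y ^ (n + 1) := by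
    rw [qS, ← tsum_mul_left]
    exact tsum_congr fun n => by ring
  have aymul : a * y * qS Q a ((Q:ℂ) * y)
      = ∑' n : ℕ, a * (qcoef Q a n * ((Q:ℂ) * y) ^ n) * y := by
    rw [qS, ← tsum_mul_left (a := a * y)]
    exact tsum_congr fun n => by ring
  have key : ∀ n : ℕ,
      qcoef Q a (n + 1) * y ^ (n + 1) - qcoef Q a n * y ^ (n + 1)
        = qcoef Q a (n + 1) * ((Q:ℂ) * y) ^ (n + 1)
          - a * (qcoef Q a n * ((Q:ℂ) * y) ^ n) * y := by
    intro n
    have hrec := qcoef_rec (a := a) hQ0 hQ1 n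
    have hexp : ((Q:ℂ) * y) ^ (n + 1) = (Q:ℂ) ^ (n + 1) * y ^ (n + 1) := mul_pow _ _ _
    have hexp' : ((Q:ℂ) * y) ^ n = (Q:ℂ) ^ n * y ^ n := mul_pow _ _ _
    rw [hexp, hexp']
    linear_combination y ^ (n + 1) * hrec
  calc (1 - y) * qS Q a y
      = qS Q a y - y * qS Q a y := by ring
    _ = (1 + ∑' n : ℕ, qcoef Q a (n + 1) * y ^ (n + 1))
        - ∑' n : ℕ, qcoef Q a n * y ^ (n + 1) := by
        rw [ymul, qS_split hQ0 hQ1 a hy]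
    _ = 1 + ∑' n : ℕ, (qcoef Q a (n + 1) * y ^ (n + 1) - qcoef Q a n * y ^ (n + 1)) := by
        rw [Summable.tsum_sub h1 h2]; ring
    _ = 1 + ∑' n : ℕ, (qcoef Q a (n + 1) * ((Q:ℂ) * y) ^ (n + 1)
          - a * (qcoef Q a n * ((Q:ℂ) * y) ^ n) * y) := by
        rw [tsum_congr key]
    _ = (1 + ∑' n : ℕ, qcoef Q a (n + 1) * ((Q:ℂ) * y) ^ (n + 1))
        - ∑' n : ℕ, a * (qcoef Q a n * ((Q:ℂ) * y) ^ n) * y := by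
        rw [Summable.tsum_sub h1' h2']; ring
    _ = (1 - a * y) * qS Q a ((Q:ℂ) * y) := by
        rw [← qS_split hQ0 hQ1 a hQy, ← aymul]; ring

lemma qS_iter (hQ0 : 0 < Q) (hQ1 : Q < 1) (a : ℂ) {x : ℂ} (hx : ‖x‖ < 1)
    (hxx : ∀ n : ℕ, 1 - x * (Q : ℂ) ^ n ≠ 0) (N : ℕ) :
    qS Q a x = (∏ k ∈ Finset.range N, (1 - a * x * (Q:ℂ) ^ k))
      / (∏ k ∈ Finset.range N, (1 - x * (Q:ℂ) ^ k)) * qS Q a (x * (Q:ℂ) ^ N) := by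
  have hQc : ‖(Q : ℂ)‖ < 1 := by
    rw [Complex.norm_real, Real.norm_eq_abs, abs_of_pos hQ0]; exact hQ1
  have hQc0 : (0:ℝ) ≤ ‖(Q : ℂ)‖ := norm_nonneg _
  induction N with
  | zero => simp
  | succ N ih =>
    have hyle : ‖x * (Q:ℂ) ^ N‖ ≤ ‖x‖ := by
      rw [norm_mul, norm_pow]
      calc ‖x‖ * ‖(Q:ℂ)‖ ^ N ≤ ‖x‖ * 1 :=
            mul_le_mul_of_nonneg_left (pow_le_one₀ hQc0 hQc.le) (norm_nonneg x)
        _ = ‖x‖ := mul_one _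
    have hy : ‖x * (Q:ℂ) ^ N‖ < 1 := lt_of_le_of_lt hyle hx
    have hfe := qS_funeq hQ0 hQ1 a hy
    have hne : (1 - x * (Q:ℂ) ^ N) ≠ 0 := hxx N
    have h3 : qS Q a (x * (Q:ℂ) ^ N)
        = (1 - a * x * (Q:ℂ) ^ N) * qS Q a (x * (Q:ℂ) ^ (N + 1)) / (1 - x * (Q:ℂ) ^ N) := by
      rw [eq_div_iff hne, show x * (Q:ℂ) ^ (N + 1) = (Q:ℂ) * (x * (Q:ℂ) ^ N) by ring]
      linear_combination hfe
    rw [ih, h3, Finset.prod_range_succ, Finset.prod_range_succ]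
    have hprodne : (∏ k ∈ Finset.range N, (1 - x * (Q:ℂ) ^ k)) ≠ 0 :=
      Finset.prod_ne_zero_iff.mpr fun k _ => hxx k
    field_simp

lemma qS_tendsto (hQ0 : 0 < Q) (hQ1 : Q < 1) (a : ℂ) {x : ℂ} (hx : ‖x‖ < 1) :
    Tendsto (fun N : ℕ => qS Q a (x * (Q:ℂ) ^ N)) atTop (𝓝 1) := by
  obtain ⟨K, hK0, hK⟩ := qcoef_bound hQ0 hQ1 a
  have hQc : ‖(Q : ℂ)‖ < 1 := by
    rw [Complex.norm_real, Real.norm_eq_abs, abs_of_pos hQ0]; exact hQ1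
  have hQc0 : (0:ℝ) ≤ ‖(Q : ℂ)‖ := norm_nonneg _
  set C : ℝ := K * (1 - ‖x‖)⁻¹ with hC
  have hbound : ∀ N : ℕ, ‖qS Q a (x * (Q:ℂ) ^ N) - 1‖ ≤ C * (‖x‖ * Q ^ N) := by
    intro N
    set y := x * (Q:ℂ) ^ N with hy'
    have hyle : ‖y‖ ≤ ‖x‖ := by
      rw [hy', norm_mul, norm_pow]
      calc ‖x‖ * ‖(Q:ℂ)‖ ^ N ≤ ‖x‖ * 1 :=
            mul_le_mul_of_nonneg_left (pow_le_one₀ hQc0 hQc.le) (norm_nonneg x)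
        _ = ‖x‖ := mul_one _
    have hy : ‖y‖ < 1 := lt_of_le_of_lt hyle hx
    have h1 : Summable fun n : ℕ => qcoef Q a (n + 1) * y ^ (n + 1) :=
      (summable_nat_add_iff 1).2 (summable_qS hQ0 hQ1 a hy)
    have h1n : Summable fun n : ℕ => ‖qcoef Q a (n + 1) * y ^ (n + 1)‖ :=
      (summable_nat_add_iff 1).2 (summable_qS_norm hQ0 hQ1 a hy)
    have split : qS Q a y - 1 = ∑' n : ℕ, qcoef Q a (n + 1) * y ^ (n + 1) := by
      rw [qS_split hQ0 hQ1 a hy]; ring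
    rw [split]
    have hgeo : Summable fun n : ℕ => K * ‖y‖ * ‖x‖ ^ n :=
      (summable_geometric_of_lt_one (norm_nonneg x) hx).mul_left _
    calc ‖∑' n : ℕ, qcoef Q a (n + 1) * y ^ (n + 1)‖
        ≤ ∑' n : ℕ, ‖qcoef Q a (n + 1) * y ^ (n + 1)‖ := norm_tsum_le_tsum_norm h1n
      _ ≤ ∑' n : ℕ, K * ‖y‖ * ‖x‖ ^ n := by
          apply Summable.tsum_le_tsum _ h1n hgeo
          intro n
          rw [norm_mul, norm_pow, pow_succ]
          calc ‖qcoef Q a (n + 1)‖ * (‖y‖ ^ n * ‖y‖)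
              ≤ K * (‖y‖ ^ n * ‖y‖) := by
                apply mul_le_mul_of_nonneg_right (hK _)
                positivity
            _ = K * ‖y‖ * ‖y‖ ^ n := by ring
            _ ≤ K * ‖y‖ * ‖x‖ ^ n := by
                apply mul_le_mul_of_nonneg_left
                  (pow_le_pow_left₀ (norm_nonneg y) hyle n)
                positivity
      _ = K * ‖y‖ * (1 - ‖x‖)⁻¹ := by
          rw [tsum_mul_left, tsum_geometric_of_lt_one (norm_nonneg x) hx]
      _ = C * ‖y‖ := by ring
      _ = C * (‖x‖ * Q ^ N) := by
          rw [hy', norm_mul, norm_pow, Complex.norm_real, Real.norm_eq_abs, abs_of_pos hQ0]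
  have htend0 : Tendsto (fun N : ℕ => C * (‖x‖ * Q ^ N)) atTop (𝓝 0) := by
    have := tendsto_pow_atTop_nhds_zero_of_lt_one hQ0.le hQ1
    have h2 := (this.const_mul ‖x‖).const_mul C
    simpa using h2
  have hmain : Tendsto (fun N : ℕ => qS Q a (x * (Q:ℂ) ^ N) - 1) atTop (𝓝 0) :=
    squeeze_zero_norm hbound htend0
  have := hmain.add_const 1
  simpa using this

lemma qbinom (hQ0 : 0 < Q) (hQ1 : Q < 1) (a : ℂ) {x : ℂ} (hx : ‖x‖ < 1)
    (hax : ∀ n : ℕ, 1 - a * x * (Q:ℂ) ^ n ≠ 0) (hxx : ∀ n : ℕ, 1 - x * (Q:ℂ) ^ n ≠ 0) :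
    qS Q a x = (∏' n : ℕ, (1 - a * x * (Q:ℂ) ^ n)) / ∏' n : ℕ, (1 - x * (Q:ℂ) ^ n) := by
  have hQc : ‖(Q : ℂ)‖ < 1 := by
    rw [Complex.norm_real, Real.norm_eq_abs, abs_of_pos hQ0]; exact hQ1
  have hax' : ∀ n : ℕ, 1 - (a * x) * (Q:ℂ) ^ n ≠ 0 := hax
  have hmA := multipliable_E hQc hax'
  have hmX := multipliable_E hQc hxx
  have hXne : (∏' n : ℕ, (1 - x * (Q:ℂ) ^ n)) ≠ 0 := E_ne_zero hQc hxx
  have tA := hmA.hasProd.tendsto_prod_nat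
  have tX := hmX.hasProd.tendsto_prod_nat
  have tend : Tendsto (fun N : ℕ =>
      (∏ k ∈ Finset.range N, (1 - a * x * (Q:ℂ) ^ k))
        / (∏ k ∈ Finset.range N, (1 - x * (Q:ℂ) ^ k)) * qS Q a (x * (Q:ℂ) ^ N)) atTop
      (𝓝 ((∏' n : ℕ, (1 - a * x * (Q:ℂ) ^ n)) / (∏' n : ℕ, (1 - x * (Q:ℂ) ^ n)) * 1)) := by
    exact (Tendsto.div tA tX hXne).mul (qS_tendsto hQ0 hQ1 a hx)
  have tconst : Tendsto (fun _ : ℕ => qS Q a x) atTop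
      (𝓝 ((∏' n : ℕ, (1 - a * x * (Q:ℂ) ^ n)) / (∏' n : ℕ, (1 - x * (Q:ℂ) ^ n)) * 1)) := by
    refine tend.congr fun N => (qS_iter hQ0 hQ1 a hx hxx N).symm
  have := tendsto_nhds_unique tendsto_const_nhds tconst
  simpa using this

end Stmt18

section Final

open Complex Filter Finset Topology


/-- Evaluation of the complex-power operator `F^{q,μ}` on `x^α`:
`q^{-2μα} Γ̃_q(-μ)⁻¹ ∫₀^1 t^{-μ-1} (q²t; q²)_∞/(q^{2α+2}t; q²)_∞ d_q t
  = q^{μ(μ-2α+1)} Γ_q(α+1)/Γ_q(α+1-μ)`,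
the Jackson integral converging absolutely. -/
theorem stmt_18 (q : ℝ) (hq0 : 0 < q) (hq1 : q < 1) (α μ : ℂ)
    (hμ : μ.re < 0)
    (hα1 : ∀ n : ℕ, 1 - qpow q (2 * ((n : ℂ) + α + 1)) ≠ 0)
    (hα2 : ∀ n : ℕ, 1 - qpow q (2 * ((n : ℂ) + α + 1 - μ)) ≠ 0)
    (hμ2 : ∀ n : ℕ, 1 - qpow q (2 * ((n : ℂ) - μ)) ≠ 0) :
    Summable (fun n : ℕ => ‖jacksonTerm q α μ n‖) ∧
    qpow q (-2 * μ * α) * (qGammaTilde q (-μ))⁻¹ *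
        ((1 - (q : ℂ) ^ 2) * ∑' n : ℕ, jacksonTerm q α μ n)
      = qpow q (μ * (μ - 2 * α + 1)) * qGamma q (α + 1) / qGamma q (α + 1 - μ) := by
  have hq2 : (0:ℝ) < q ^ 2 := by positivity
  have hq21 : q ^ 2 < 1 := by nlinarith
  set r : ℂ := (q:ℂ) ^ 2 with hrdef
  have hQr : ((q ^ 2 : ℝ) : ℂ) = r := by push_cast; rfl
  have hr : ‖r‖ < 1 := by
    rw [hrdef, norm_pow, Complex.norm_real, Real.norm_eq_abs, abs_of_pos hq0]
    nlinarith
  set L : ℂ := (Real.log q : ℂ) with hLdef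
  have hexpL : Complex.exp L = (q:ℂ) := by
    rw [hLdef, ← Complex.ofReal_exp, Real.exp_log hq0]
  -- basic qpow algebra
  have hmul : ∀ w w' : ℂ, qpow q w * qpow q w' = qpow q (w + w') := by
    intro w w'; simp only [qpow]; rw [← Complex.exp_add]; congr 1; ring
  have hnatw : ∀ (n : ℕ) (w : ℂ), qpow q ((n:ℂ) * w) = (qpow q w) ^ n := by
    intro n w; simp only [qpow]; rw [mul_assoc]; exact Complex.exp_nat_mul _ n
  have hq2pow : qpow q 2 = r := by
    simp only [qpow]; rw [show (2:ℂ) * L = L + L by ring, Complex.exp_add, hexpL, hrdef]; ring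
  have hnat : ∀ n : ℕ, qpow q (2 * (n:ℂ)) = r ^ n := by
    intro n
    rw [show (2:ℂ) * (n:ℂ) = (n:ℂ) * 2 by ring, hnatw, hq2pow]
  have hq2n : ∀ n : ℕ, (q:ℂ) ^ (2 * n) = r ^ n := by
    intro n; rw [pow_mul]
  -- the main constants
  set a : ℂ := qpow q (2 * (α + 1)) with hadef
  set x : ℂ := qpow q (-(2 * μ)) with hxdef
  have hx : ‖x‖ < 1 := by
    rw [hxdef]
    simp only [qpow]
    rw [Complex.norm_exp]
    have hre : ((-(2 * μ)) * L).re = -(2 * μ.re) * Real.log q := by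
      rw [hLdef]
      simp [Complex.mul_re, Complex.ofReal_re, Complex.ofReal_im]
    rw [hre]
    have hlog : Real.log q < 0 := Real.log_neg hq0 hq1
    have h2 : -(2 * μ.re) * Real.log q < 0 := by nlinarith
    calc Real.exp (-(2 * μ.re) * Real.log q) < Real.exp 0 := Real.exp_lt_exp.mpr h2
      _ = 1 := Real.exp_zero
  have hxpow : ∀ n : ℕ, x ^ n = qpow q ((n:ℂ) * (-(2*μ))) := by
    intro n; rw [hnatw, hxdef]
  -- nonvanishing facts in normalized form
  have hBfac : ∀ m : ℕ, (1:ℂ) - a * r ^ m ≠ 0 := by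
    intro m
    have e : a * r ^ m = qpow q (2 * ((m:ℂ) + α + 1)) := by
      rw [← hnat m, hadef, hmul]; congr 1; ring
    rw [e]; exact hα1 m
  have hWfac : ∀ m : ℕ, (1:ℂ) - a * x * r ^ m ≠ 0 := by
    intro m
    have e : a * x * r ^ m = qpow q (2 * ((m:ℂ) + α + 1 - μ)) := by
      rw [← hnat m, hadef, hxdef, hmul, hmul]; congr 1; ring
    rw [e]; exact hα2 m
  have hXfac : ∀ m : ℕ, (1:ℂ) - x * r ^ m ≠ 0 := by
    intro m
    have e : x * r ^ m = qpow q (2 * ((m:ℂ) - μ)) := by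
      rw [← hnat m, hxdef, hmul]; congr 1; ring
    rw [e]; exact hμ2 m
  have hRfac : ∀ m : ℕ, (1:ℂ) - r * r ^ m ≠ 0 := by
    intro m
    have := Stmt18.one_sub_cQpow_ne hq2 hq21 m
    rw [hQr] at this
    rwa [show r * r ^ m = r ^ (m + 1) by rw [pow_succ]; ring]
  -- the four infinite products
  set R : ℂ := ∏' j : ℕ, (1 - r * r ^ j) with hRdef
  set B : ℂ := ∏' j : ℕ, (1 - a * r ^ j) with hBdef
  set X : ℂ := ∏' j : ℕ, (1 - x * r ^ j) with hXdef2
  set W : ℂ := ∏' j : ℕ, (1 - a * x * r ^ j) with hWdef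
  have hRne : R ≠ 0 := Stmt18.E_ne_zero hr hRfac
  have hBne : B ≠ 0 := Stmt18.E_ne_zero hr hBfac
  have hXne : X ≠ 0 := Stmt18.E_ne_zero hr hXfac
  have hWne : W ≠ 0 := Stmt18.E_ne_zero hr hWfac
  -- nonvanishing of shifted factors
  have hRfac' : ∀ n j : ℕ, (1:ℂ) - r * r ^ n * r ^ j ≠ 0 := by
    intro n j
    rw [show r * r ^ n * r ^ j = r * r ^ (n + j) by rw [pow_add]; ring]
    exact hRfac (n + j)
  have hBfac' : ∀ n j : ℕ, (1:ℂ) - a * r ^ n * r ^ j ≠ 0 := by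
    intro n j
    rw [show a * r ^ n * r ^ j = a * r ^ (n + j) by rw [pow_add]; ring]
    exact hBfac (n + j)
  -- claim 1 : jacksonTerm in terms of qcoef
  have claim1 : ∀ n : ℕ, jacksonTerm q α μ n
      = R / B * (Stmt18.qcoef (q ^ 2) a n * x ^ n) := by
    intro n
    have ef1 : ∀ j : ℕ, qpow q (2 + 2 * (j:ℂ)) * (q:ℂ) ^ (2 * n) = 1 * (r * r ^ n * r ^ j) := by
      intro j
      rw [hq2n n, ← hnat n, ← hnat j, ← hq2pow, hmul, hmul, hmul, one_mul]
      congr 1; ring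
    have ef2 : ∀ j : ℕ, qpow q (2 * α + 2 + 2 * (j:ℂ)) * (q:ℂ) ^ (2 * n)
        = 1 * (a * r ^ n * r ^ j) := by
      intro j
      rw [hq2n n, ← hnat n, ← hnat j, hadef, hmul, hmul, hmul, one_mul]
      congr 1; ring
    have ef3 : qpow q (2 * (n:ℂ) * (-μ - 1)) * (q:ℂ) ^ (2 * n) = x ^ n := by
      rw [hq2n n, ← hnat n, hmul, hxpow n]
      congr 1; ring
    have hT : (∏' j : ℕ, (1 - qpow q (2 + 2 * (j:ℂ)) * (q:ℂ) ^ (2 * n)) /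
          (1 - qpow q (2 * α + 2 + 2 * (j:ℂ)) * (q:ℂ) ^ (2 * n)))
        = (∏' j : ℕ, (1 - r * r ^ n * r ^ j)) / ∏' j : ℕ, (1 - a * r ^ n * r ^ j) := by
      rw [tprod_congr (fun j => by rw [ef1 j, ef2 j, one_mul, one_mul])]
      exact (Stmt18.hasProd_div (Stmt18.multipliable_E hr (hRfac' n)).hasProd
        (Stmt18.multipliable_E hr (hBfac' n)).hasProd
        (Stmt18.E_ne_zero hr (hBfac' n))).tprod_eq
    have eR := Stmt18.E_shift hr hRfac n
    have eB := Stmt18.E_shift hr hBfac n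
    rw [jacksonTerm]
    rw [hT]
    rw [show qpow q (2 * (n:ℂ) * (-μ - 1)) *
        ((∏' j : ℕ, (1 - r * r ^ n * r ^ j)) / ∏' j : ℕ, (1 - a * r ^ n * r ^ j)) *
        (q:ℂ) ^ (2 * n)
      = (qpow q (2 * (n:ℂ) * (-μ - 1)) * (q:ℂ) ^ (2 * n)) *
        ((∏' j : ℕ, (1 - r * r ^ n * r ^ j)) / ∏' j : ℕ, (1 - a * r ^ n * r ^ j)) by ring,
      ef3]
    have hqc : Stmt18.qcoef (q ^ 2) a n
        = (∏ j ∈ Finset.range n, (1 - a * r ^ j)) / ∏ j ∈ Finset.range n, (1 - r * r ^ j) := by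
      rw [Stmt18.qcoef, Finset.prod_div_distrib]
      congr 1
      · exact Finset.prod_congr rfl fun j _ => by rw [hQr]
      · exact Finset.prod_congr rfl fun j _ => by
          rw [hQr, show r ^ (j + 1) = r * r ^ j by rw [pow_succ]; ring]
    have hPdne : (∏ j ∈ Finset.range n, (1 - r * r ^ j)) ≠ 0 :=
      Finset.prod_ne_zero_iff.mpr fun j _ => hRfac j
    have hPane : (∏ j ∈ Finset.range n, (1 - a * r ^ j)) ≠ 0 :=
      Finset.prod_ne_zero_iff.mpr fun j _ => hBfac j
    have hEdne : (∏' j : ℕ, (1 - a * r ^ n * r ^ j)) ≠ 0 :=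
      Stmt18.E_ne_zero hr (hBfac' n)
    rw [hqc]
    rw [hRdef, hBdef, eR, eB]
    field_simp
  -- summability
  have hsummable : Summable (fun n : ℕ => ‖jacksonTerm q α μ n‖) := by
    have h := (Stmt18.summable_qS_norm hq2 hq21 a hx).mul_left ‖R / B‖
    refine h.congr fun n => ?_
    rw [claim1 n]
    exact (norm_mul _ _).symm
  refine ⟨hsummable, ?_⟩
  -- the sum via the q-binomial theorem
  have hqb := Stmt18.qbinom hq2 hq21 a hx
    (by intro n; rw [hQr]; exact hWfac n)
    (by intro n; rw [hQr]; exact hXfac n)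
  have hsum : (∑' n : ℕ, jacksonTerm q α μ n) = R / B * (W / X) := by
    rw [tsum_congr claim1, tsum_mul_left]
    congr 1
    have : (∑' n : ℕ, Stmt18.qcoef (q ^ 2) a n * x ^ n) = Stmt18.qS (q ^ 2) a x := rfl
    rw [this, hqb, hWdef, hXdef2]
    congr 1
    · exact tprod_congr fun n => by rw [hQr]
    · exact tprod_congr fun n => by rw [hQr]
  -- qGamma in product form
  set LL : ℂ := Complex.log (1 - (q:ℂ) ^ 2) with hLLdef
  have hGamma : ∀ (z cz : ℂ), qpow q (2 * z) = cz → (∀ m : ℕ, (1:ℂ) - cz * r ^ m ≠ 0) →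
      qGamma q z = Complex.exp ((1 - z) * LL) * (R / ∏' j : ℕ, (1 - cz * r ^ j)) := by
    intro z cz hcz hz
    rw [qGamma]
    congr 1
    have efn : ∀ n : ℕ, qpow q (2 * ((n:ℂ) + 1)) = 1 * (r * r ^ n) := by
      intro n
      rw [← hnat n, ← hq2pow, hmul, one_mul]
      congr 1; ring
    have efz : ∀ n : ℕ, qpow q (2 * ((n:ℂ) + z)) = 1 * (cz * r ^ n) := by
      intro n
      rw [← hnat n, ← hcz, hmul, one_mul]
      congr 1; ring
    rw [tprod_congr (fun n => by rw [efn n, efz n, one_mul, one_mul])]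
    rw [hRdef]
    exact (Stmt18.hasProd_div (Stmt18.multipliable_E hr hRfac).hasProd
      (Stmt18.multipliable_E hr hz).hasProd (Stmt18.E_ne_zero hr hz)).tprod_eq
  have hG1 : qGamma q (α + 1) = Complex.exp ((1 - (α + 1)) * LL) * (R / B) :=
    hGamma (α + 1) a rfl hBfac
  have hG2 : qGamma q (α + 1 - μ) = Complex.exp ((1 - (α + 1 - μ)) * LL) * (R / W) := by
    refine hGamma (α + 1 - μ) (a * x) ?_ hWfac
    rw [hadef, hxdef, hmul]; congr 1; ring
  have hG3 : qGamma q (-μ) = Complex.exp ((1 - -μ) * LL) * (R / X) := by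
    refine hGamma (-μ) x ?_ hXfac
    rw [hxdef]; congr 1; ring
  -- final assembly
  have h1mr : (1:ℂ) - (q:ℂ) ^ 2 = Complex.exp LL := by
    rw [hLLdef, Complex.exp_log]
    rw [show (1:ℂ) - (q:ℂ) ^ 2 = ((1 - q ^ 2 : ℝ) : ℂ) by push_cast; ring]
    exact_mod_cast Complex.ofReal_ne_zero.mpr (by nlinarith)
  have hqpne : ∀ w : ℂ, qpow q w ≠ 0 := fun w => Complex.exp_ne_zero _
  have hdivq : ∀ w w' : ℂ, qpow q w / qpow q w' = qpow q (w - w') := by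
    intro w w'; simp only [qpow]; rw [← Complex.exp_sub]; congr 1; ring
  have hexpne : ∀ w : ℂ, Complex.exp w ≠ 0 := fun w => Complex.exp_ne_zero _
  rw [hsum, qGammaTilde, hG1, hG2, hG3, h1mr]
  rw [show qpow q (-2 * μ * α) * (qpow q (-(-μ * (-μ - 1))) *
        (Complex.exp ((1 - -μ) * LL) * (R / X)))⁻¹ *
        (Complex.exp LL * (R / B * (W / X)))
      = (qpow q (-2 * μ * α) / qpow q (-(-μ * (-μ - 1)))) *
        (Complex.exp LL / Complex.exp ((1 - -μ) * LL)) * (W / B) by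
    simp only [qpow]
    field_simp [hXne, hBne, hRne, hWne, Complex.exp_ne_zero]]
  rw [show qpow q (μ * (μ - 2 * α + 1)) * (Complex.exp ((1 - (α + 1)) * LL) * (R / B)) /
        (Complex.exp ((1 - (α + 1 - μ)) * LL) * (R / W))
      = qpow q (μ * (μ - 2 * α + 1)) *
        (Complex.exp ((1 - (α + 1)) * LL) / Complex.exp ((1 - (α + 1 - μ)) * LL)) * (W / B) by
    simp only [qpow]
    field_simp [hXne, hBne, hRne, hWne, Complex.exp_ne_zero]]
  congr 2
  · rw [hdivq]; congr 1; ring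
  · rw [← Complex.exp_sub, ← Complex.exp_sub]
    congr 1; ring

end Final
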